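/- Consider the boundary equation obtained by setting S₁ = 0 in the two-dimensional risky Black–Scholes (arithmetic-average basket) problem: ∂_tW − (σ₂²S₂²/2)∂_{S₂S₂}W − r_{R₂} S₂ ∂_{S₂}W + rW + f(W) = 0 on (0,T)×(0,∞), with initial condition W(0,S₂) = max{α(S₂/2 − K), 0}. Then the function W(t,S₂) := (1/2) 𝓑𝓢_{2K}(t,S₂) e^{−(λ_B(1−R_B)+λ_C(1−R_C)) t}, where 𝓑𝓢_{2K} is the Black–Scholes formula with strike 2K, volatility σ₂ and repo rate r_{R₂}, satisfies this equation at every (t,S₂) ∈ (0,T)×(0,∞) and satisfies lim_{t→0⁺} W(t,S₂) = max{α(S₂/2 − K), 0} for every S₂ > 0. -/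

import Mathlib

/-!
Differentiating `𝓑𝓢` produces `φ`-terms that cancel in pairs because of the identity
`S e^{−(r−r_R)t} φ(ζ₁) = K e^{−rt} φ(ζ₂)`; what remains is the Black–Scholes equation
`∂ₜ𝓑𝓢 = σ²S²/2 ∂²_S 𝓑𝓢 + r_R S ∂_S 𝓑𝓢 − r 𝓑𝓢`.

The price is nonnegative: with `s = σ√t` the call is `A Φ(ζ₂ + s) − B Φ(ζ₂)` where
`A = B e^{ζ₂ s + s²/2}`, and `x ↦ A Φ(x + s) − B Φ(x)` increases on `(−∞, ζ₂]` and vanishes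
at `−∞`; the put is the same expression with `A` and `B` exchanged, at `−ζ₁`. Hence
`f(W) = (λ_B(1−R_B) + λ_C(1−R_C)) W`, which is exactly the rate absorbed by the exponential
factor of `W`.

As `t → 0⁺` both `αζᵢ` are `α log(S/K)/(σ√t) + O(√t)`, so `Φ(αζᵢ)` tends to `1`, `0` or
`Φ(0)` according to the sign of `α(S − K)`, and `𝓑𝓢` tends to the payoff.
-/

/-- Standard normal cumulative distribution function. -/
noncomputable def Phi (x : ℝ) : ℝ :=
  (Real.sqrt (2 * Real.pi))⁻¹ * ∫ u in Set.Iic x, Real.exp (-u ^ 2 / 2)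

/-- `ζ₁ = (log(S/K) + (r_R + σ²/2)t)/(σ√t)`. -/
noncomputable def zeta1 (σ K r_R t S : ℝ) : ℝ :=
  (Real.log (S / K) + (r_R + σ ^ 2 / 2) * t) / (σ * Real.sqrt t)

/-- `ζ₂ = ζ₁ − σ√t`. -/
noncomputable def zeta2 (σ K r_R t S : ℝ) : ℝ :=
  zeta1 σ K r_R t S - σ * Real.sqrt t

/-- The Black–Scholes formula
`𝓑𝓢(t,S) = α S e^{−(r−r_R)t} Φ(αζ₁) − α K e^{−rt} Φ(αζ₂)` (t = time to maturity). -/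
noncomputable def BS (σ K r r_R α t S : ℝ) : ℝ :=
  α * S * Real.exp (-(r - r_R) * t) * Phi (α * zeta1 σ K r_R t S)
    - α * K * Real.exp (-r * t) * Phi (α * zeta2 σ K r_R t S)

/-- The XVA source term `f(v) = λ_B(1−R_B) min{v,0} + (λ_C(1−R_C)+s_F) max{v,0}`
with funding spread `s_F = (1−R_B)λ_B`. -/
noncomputable def fXVA (lB lC RB RC : ℝ) (v : ℝ) : ℝ :=
  lB * (1 - RB) * min v 0 + (lC * (1 - RC) + (1 - RB) * lB) * max v 0

open Real Filter Set Topology MeasureTheory ProbabilityTheory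

local notation "φ" => gaussianPDFReal 0 1

lemma gaussianPDFReal_zero_one_apply (x : ℝ) : φ x = (√(2 * π))⁻¹ * exp (-x ^ 2 / 2) := by
  simp [gaussianPDFReal]

lemma gaussianPDFReal_zero_one_neg (x : ℝ) : φ (-x) = φ x := by
  simp [gaussianPDFReal_zero_one_apply]

lemma gaussianPDFReal_zero_one_add (x s : ℝ) : φ (x + s) = φ x * exp (-(x * s) - s ^ 2 / 2) := by
  rw [gaussianPDFReal_zero_one_apply, gaussianPDFReal_zero_one_apply, mul_assoc, ← exp_add]
  ring_nf

lemma Phi_eq_integral_gaussianPDFReal (x : ℝ) : Phi x = ∫ u in Iic x, φ u := by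
  simp_rw [Phi, gaussianPDFReal_zero_one_apply, integral_const_mul]

lemma Phi_eq_cdf (x : ℝ) : Phi x = cdf (gaussianReal 0 1) x := by
  rw [cdf_eq_real, measureReal_def, gaussianReal_apply_eq_integral _ one_ne_zero,
    ENNReal.toReal_ofReal
      (setIntegral_nonneg measurableSet_Iic fun u _ => gaussianPDFReal_nonneg _ _ u),
    Phi_eq_integral_gaussianPDFReal]

lemma tendsto_Phi_atBot : Tendsto Phi atBot (𝓝 0) := by
  rw [funext Phi_eq_cdf]; exact tendsto_cdf_atBot _

lemma tendsto_Phi_atTop : Tendsto Phi atTop (𝓝 1) := by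
  rw [funext Phi_eq_cdf]; exact tendsto_cdf_atTop _

lemma hasDerivAt_Phi (x : ℝ) : HasDerivAt Phi (φ x) x := by
  have hint := integrable_gaussianPDFReal 0 1
  have hcont : Continuous φ := by
    simp_rw [funext gaussianPDFReal_zero_one_apply]; fun_prop
  have hsplit : Phi = fun y => Phi 0 + ∫ u in (0 : ℝ)..y, φ u := by
    funext y
    simp only [Phi_eq_integral_gaussianPDFReal]
    rw [← intervalIntegral.integral_Iic_sub_Iic hint.integrableOn hint.integrableOn]
    ring
  rw [hsplit]
  exact (intervalIntegral.integral_hasDerivAt_right hint.intervalIntegrable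
    hint.aestronglyMeasurable.stronglyMeasurableAtFilter hcont.continuousAt).const_add _

lemma continuous_Phi : Continuous Phi :=
  continuous_iff_continuousAt.2 fun x => (hasDerivAt_Phi x).continuousAt

lemma hasDerivAt_sign_mul_Phi {α : ℝ} (hα : α = 1 ∨ α = -1) {z : ℝ → ℝ} {z' x : ℝ}
    (hz : HasDerivAt z z' x) : HasDerivAt (fun y => α * Phi (α * z y)) (φ (z x) * z') x := by
  refine (((hasDerivAt_Phi (α * z x)).comp x (hz.const_mul α)).const_mul α).congr_deriv ?_
  rcases hα with rfl | rfl <;> simp [gaussianPDFReal_zero_one_neg]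

lemma hasDerivAt_mul_Phi_sub_mul_Phi {α : ℝ} (hα : α = 1 ∨ α = -1) {a b z₁ z₂ : ℝ → ℝ}
    {a' b' z₁' z₂' x : ℝ} (ha : HasDerivAt a a' x) (hb : HasDerivAt b b' x)
    (hz₁ : HasDerivAt z₁ z₁' x) (hz₂ : HasDerivAt z₂ z₂' x)
    (hφ : a x * φ (z₁ x) = b x * φ (z₂ x)) :
    HasDerivAt (fun y => a y * (α * Phi (α * z₁ y)) - b y * (α * Phi (α * z₂ y)))
      (a' * (α * Phi (α * z₁ x)) - b' * (α * Phi (α * z₂ x))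
        + a x * φ (z₁ x) * (z₁' - z₂')) x := by
  refine ((ha.mul (hasDerivAt_sign_mul_Phi hα hz₁)).sub
    (hb.mul (hasDerivAt_sign_mul_Phi hα hz₂))).congr_deriv ?_
  linear_combination z₂' * hφ

lemma mul_Phi_add_sub_mul_Phi_nonneg {A B s z : ℝ} (hB : 0 ≤ B) (hs : 0 ≤ s)
    (hA : A = B * exp (z * s + s ^ 2 / 2)) : 0 ≤ A * Phi (z + s) - B * Phi z := by
  set F : ℝ → ℝ := fun x => A * Phi (x + s) - B * Phi x
  have hF : ∀ x, HasDerivAt F (A * φ (x + s) - B * φ x) x := fun x =>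
    (((hasDerivAt_Phi (x + s)).comp_add_const x s).const_mul A).sub
      ((hasDerivAt_Phi x).const_mul B)
  have hF' : ∀ x ≤ z, 0 ≤ A * φ (x + s) - B * φ x := fun x hx => by
    have hexp : 1 ≤ exp ((z - x) * s) := one_le_exp (mul_nonneg (sub_nonneg.2 hx) hs)
    have : A * φ (x + s) - B * φ x = B * φ x * (exp ((z - x) * s) - 1) := by
      rw [hA, gaussianPDFReal_zero_one_add, mul_comm (φ x), ← mul_assoc, mul_assoc B, ← exp_add]
      ring_nf
    rw [this]
    exact mul_nonneg (mul_nonneg hB (gaussianPDFReal_nonneg _ _ _)) (sub_nonneg.2 hexp)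
  have hmono : MonotoneOn F (Iic z) :=
    monotoneOn_of_hasDerivWithinAt_nonneg (convex_Iic z)
      (fun x _ => (hF x).continuousAt.continuousWithinAt) (fun x _ => (hF x).hasDerivWithinAt)
      (fun x hx => hF' x (interior_subset (s := Iic z) hx))
  have hlim : Tendsto F atBot (𝓝 0) := by
    have h := ((tendsto_Phi_atBot.comp (tendsto_atBot_add_const_right _ s tendsto_id)).const_mul
      A).sub (tendsto_Phi_atBot.const_mul B)
    simpa using h
  exact le_of_tendsto hlim ((eventually_le_atBot z).mono fun x hx => hmono hx self_mem_Iic hx)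

lemma tendsto_sqrt_nhdsGT_zero : Tendsto (fun t : ℝ => √t) (𝓝[>] 0) (𝓝[>] 0) :=
  tendsto_nhdsWithin_iff.2 ⟨(continuous_sqrt.tendsto' 0 0 sqrt_zero).mono_left nhdsWithin_le_nhds,
    eventually_mem_nhdsWithin.mono fun _ ht => sqrt_pos.2 ht⟩

lemma tendsto_exp_mul_nhdsGT_zero (c : ℝ) : Tendsto (fun t => exp (c * t)) (𝓝[>] 0) (𝓝 1) :=
  ((by fun_prop : Continuous fun t => exp (c * t)).tendsto' 0 1 (by simp)).mono_left
    nhdsWithin_le_nhds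

lemma tendsto_div_sqrt_add_mul_sqrt_atTop {L : ℝ} (hL : 0 < L) (b : ℝ) :
    Tendsto (fun t => L / √t + b * √t) (𝓝[>] 0) atTop := by
  have hinv := (tendsto_inv_nhdsGT_zero.comp tendsto_sqrt_nhdsGT_zero).const_mul_atTop hL
  have hsq := (tendsto_sqrt_nhdsGT_zero.mono_right nhdsWithin_le_nhds).const_mul b
  simpa [div_eq_mul_inv] using hinv.atTop_add hsq

lemma tendsto_Phi_div_sqrt_add_mul_sqrt_of_pos {L : ℝ} (hL : 0 < L) (b : ℝ) :
    Tendsto (fun t => Phi (L / √t + b * √t)) (𝓝[>] 0) (𝓝 1) :=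
  tendsto_Phi_atTop.comp (tendsto_div_sqrt_add_mul_sqrt_atTop hL b)

lemma tendsto_Phi_div_sqrt_add_mul_sqrt_of_neg {L : ℝ} (hL : L < 0) (b : ℝ) :
    Tendsto (fun t => Phi (L / √t + b * √t)) (𝓝[>] 0) (𝓝 0) := by
  have h := tendsto_neg_atTop_atBot.comp (tendsto_div_sqrt_add_mul_sqrt_atTop (neg_pos.2 hL) (-b))
  refine tendsto_Phi_atBot.comp (h.congr fun t => ?_)
  simp only [Function.comp_apply]
  ring

lemma tendsto_Phi_zero_div_sqrt_add_mul_sqrt (b : ℝ) :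
    Tendsto (fun t => Phi (0 / √t + b * √t)) (𝓝[>] 0) (𝓝 (Phi 0)) := by
  have h : Tendsto (fun t => 0 / √t + b * √t) (𝓝[>] 0) (𝓝 0) := by
    simpa using (tendsto_sqrt_nhdsGT_zero.mono_right nhdsWithin_le_nhds).const_mul b
  exact (continuous_Phi.tendsto 0).comp h

lemma log_div_mul_sub_pos {S K : ℝ} (hS : 0 < S) (hK : 0 < K) (hSK : S ≠ K) :
    0 < log (S / K) * (S - K) := by
  rcases hSK.lt_or_gt with h | h
  · exact mul_pos_of_neg_of_neg (log_neg (div_pos hS hK) ((div_lt_one hK).2 h)) (by linarith)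
  · exact mul_pos (log_pos ((one_lt_div hK).2 h)) (by linarith)

section BlackScholes

variable {σ K r rR α t S : ℝ}

lemma BS_eq : BS σ K r rR α t S = S * exp (-(r - rR) * t) * (α * Phi (α * zeta1 σ K rR t S))
    - K * exp (-r * t) * (α * Phi (α * zeta2 σ K rR t S)) := by
  rw [BS]; ring

lemma zeta1_mul_sqrt (hσ : 0 < σ) (ht : 0 < t) :
    zeta1 σ K rR t S * (σ * √t) = log (S / K) + (rR + σ ^ 2 / 2) * t :=
  div_mul_cancel₀ _ (by positivity)

lemma exp_mul_exp_zeta1 (hσ : 0 < σ) (ht : 0 < t) (hK : 0 < K) (hS : 0 < S) :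
    K * exp (-r * t) * exp (zeta1 σ K rR t S * (σ * √t) - (σ * √t) ^ 2 / 2)
      = S * exp (-(r - rR) * t) := by
  have h : -r * t + (zeta1 σ K rR t S * (σ * √t) - (σ * √t) ^ 2 / 2)
      = log (S / K) + -(r - rR) * t := by
    rw [zeta1_mul_sqrt hσ ht, mul_pow, sq_sqrt ht.le]; ring
  rw [mul_assoc, ← exp_add, h, exp_add, exp_log (div_pos hS hK)]
  field_simp

lemma mul_gaussianPDFReal_zeta1 (hσ : 0 < σ) (ht : 0 < t) (hK : 0 < K) (hS : 0 < S) :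
    S * exp (-(r - rR) * t) * φ (zeta1 σ K rR t S)
      = K * exp (-r * t) * φ (zeta2 σ K rR t S) := by
  rw [← exp_mul_exp_zeta1 (rR := rR) hσ ht hK hS, zeta2, sub_eq_add_neg (zeta1 σ K rR t S),
    gaussianPDFReal_zero_one_add]
  ring_nf

lemma BS_nonneg (hα : α = 1 ∨ α = -1) (hσ : 0 < σ) (hK : 0 < K) (ht : 0 < t) (hS : 0 < S) :
    0 ≤ BS σ K r rR α t S := by
  have key := exp_mul_exp_zeta1 (r := r) (rR := rR) hσ ht hK hS
  set s := σ * √t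
  set z := zeta1 σ K rR t S
  have hs : 0 ≤ s := by positivity
  have hB : 0 ≤ K * exp (-r * t) := by positivity
  have hA : 0 ≤ S * exp (-(r - rR) * t) := by positivity
  rcases hα with rfl | rfl
  · have h := mul_Phi_add_sub_mul_Phi_nonneg (A := S * exp (-(r - rR) * t)) (z := z - s) hB hs
      (by rw [← key]; ring_nf)
    simpa [BS, zeta2] using h
  · have h := mul_Phi_add_sub_mul_Phi_nonneg (A := K * exp (-r * t)) (z := -z) hA hs
      (by rw [← key, mul_assoc, ← exp_add]; ring_nf; rw [exp_zero, mul_one])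
    simpa [BS, zeta2, neg_add_eq_sub, add_comm] using h

lemma hasDerivAt_zeta1_spot (hK : 0 < K) (hS : 0 < S) :
    HasDerivAt (fun s => zeta1 σ K rR t s) (S⁻¹ / (σ * √t)) S := by
  have h := ((((hasDerivAt_id S).div_const K).log (div_pos hS hK).ne').add_const
    ((rR + σ ^ 2 / 2) * t)).div_const (σ * √t)
  refine h.congr_deriv ?_
  simp only [id]
  field_simp

lemma hasDerivAt_BS_spot (hα : α = 1 ∨ α = -1) (hσ : 0 < σ) (hK : 0 < K) (ht : 0 < t)
    (hS : 0 < S) :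
    HasDerivAt (fun s => BS σ K r rR α t s)
      (exp (-(r - rR) * t) * (α * Phi (α * zeta1 σ K rR t S))) S := by
  have hz := hasDerivAt_zeta1_spot (σ := σ) (rR := rR) (t := t) hK hS
  have h := hasDerivAt_mul_Phi_sub_mul_Phi hα ((hasDerivAt_id S).mul_const (exp (-(r - rR) * t)))
    (hasDerivAt_const S (K * exp (-r * t))) hz (hz.sub_const (σ * √t))
    (mul_gaussianPDFReal_zeta1 hσ ht hK hS)
  simp only [BS_eq]
  exact h.congr_deriv (by simp)

lemma hasDerivAt_BS_time (hα : α = 1 ∨ α = -1) (hσ : 0 < σ) (hK : 0 < K) (ht : 0 < t)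
    (hS : 0 < S) :
    HasDerivAt (fun τ => BS σ K r rR α τ S)
      (-(r - rR) * (S * exp (-(r - rR) * t)) * (α * Phi (α * zeta1 σ K rR t S))
        + r * (K * exp (-r * t)) * (α * Phi (α * zeta2 σ K rR t S))
        + S * exp (-(r - rR) * t) * φ (zeta1 σ K rR t S) * (σ / (2 * √t))) t := by
  have hz : DifferentiableAt ℝ (fun τ => zeta1 σ K rR τ S) t := by
    unfold zeta1
    fun_prop (disch := positivity)
  have hexp (c : ℝ) (m : ℝ) : HasDerivAt (fun τ => m * exp (c * τ)) (c * (m * exp (c * t))) t :=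
    (((hasDerivAt_id' t).const_mul c).exp.const_mul m).congr_deriv (by ring)
  have hz₂ : HasDerivAt (fun τ => zeta2 σ K rR τ S)
      (deriv (fun τ => zeta1 σ K rR τ S) t - σ * (1 / (2 * √t))) t :=
    hz.hasDerivAt.sub ((hasDerivAt_sqrt ht.ne').const_mul σ)
  have h := hasDerivAt_mul_Phi_sub_mul_Phi hα (hexp (-(r - rR)) S) (hexp (-r) K) hz.hasDerivAt
    hz₂ (mul_gaussianPDFReal_zeta1 hσ ht hK hS)
  simp only [BS_eq]
  exact h.congr_deriv (by field_simp; ring)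

lemma BS_pde (hα : α = 1 ∨ α = -1) (hσ : 0 < σ) (hK : 0 < K) (ht : 0 < t) (hS : 0 < S) :
    deriv (fun τ => BS σ K r rR α τ S) t
      - σ ^ 2 * S ^ 2 / 2 * deriv (deriv (fun s => BS σ K r rR α t s)) S
      - rR * S * deriv (fun s => BS σ K r rR α t s) S + r * BS σ K r rR α t S = 0 := by
  have hΔ : deriv (fun s => BS σ K r rR α t s)
      =ᶠ[𝓝 S] fun s => exp (-(r - rR) * t) * (α * Phi (α * zeta1 σ K rR t s)) :=
    (eventually_gt_nhds hS).mono fun s hs => (hasDerivAt_BS_spot hα hσ hK ht hs).deriv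
  have hΓ := (hasDerivAt_sign_mul_Phi hα (hasDerivAt_zeta1_spot (σ := σ) (rR := rR) (t := t)
    hK hS)).const_mul (exp (-(r - rR) * t))
  rw [(hasDerivAt_BS_time hα hσ hK ht hS).deriv, hΔ.deriv_eq, hΓ.deriv,
    (hasDerivAt_BS_spot hα hσ hK ht hS).deriv, BS_eq]
  have : 0 < √t := sqrt_pos.2 ht
  field_simp
  ring

lemma mul_zeta1_eq (hσ : 0 < σ) (ht : 0 < t) :
    α * zeta1 σ K rR t S = α * log (S / K) / σ / √t + α * (rR + σ ^ 2 / 2) / σ * √t := by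
  have : 0 < √t := sqrt_pos.2 ht
  rw [zeta1]
  field_simp
  rw [sq_sqrt ht.le]

lemma mul_zeta2_eq (hσ : 0 < σ) (ht : 0 < t) :
    α * zeta2 σ K rR t S = α * log (S / K) / σ / √t + α * (rR - σ ^ 2 / 2) / σ * √t := by
  have : 0 < √t := sqrt_pos.2 ht
  rw [zeta2, mul_sub, mul_zeta1_eq hσ ht]
  field_simp
  ring

lemma tendsto_BS_payoff (hα : α = 1 ∨ α = -1) (hσ : 0 < σ) (hK : 0 < K) (hS : 0 < S) :
    Tendsto (fun t => BS σ K r rR α t S) (𝓝[>] 0) (𝓝 (max (α * (S - K)) 0)) := by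
  set L := α * log (S / K) / σ
  have hlim (P : ℝ) (hP : ∀ b, Tendsto (fun t => Phi (L / √t + b * √t)) (𝓝[>] 0) (𝓝 P)) :
      Tendsto (fun t => BS σ K r rR α t S) (𝓝[>] 0) (𝓝 (α * (S - K) * P)) := by
    have h := (((tendsto_exp_mul_nhdsGT_zero (-(r - rR))).const_mul S).mul
        ((hP (α * (rR + σ ^ 2 / 2) / σ)).const_mul α)).sub
      (((tendsto_exp_mul_nhdsGT_zero (-r)).const_mul K).mul
        ((hP (α * (rR - σ ^ 2 / 2) / σ)).const_mul α))
    rw [show α * (S - K) * P = S * 1 * (α * P) - K * 1 * (α * P) by ring]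
    refine h.congr' ?_
    filter_upwards [self_mem_nhdsWithin] with t ht
    rw [BS_eq, mul_zeta1_eq hσ ht, mul_zeta2_eq hσ ht]
  have hsign (hSK : S ≠ K) : 0 < L * (α * (S - K)) := by
    have hα2 : α * α = 1 := by rcases hα with rfl | rfl <;> norm_num
    have h : L * (α * (S - K)) = α * α * (log (S / K) * (S - K)) / σ := by
      simp only [L]; ring
    rw [h, hα2, one_mul]
    exact div_pos (log_div_mul_sub_pos hS hK hSK) hσ
  rcases lt_trichotomy (α * (S - K)) 0 with h | h | h
  · have hL := neg_of_mul_pos_left (hsign (by rintro rfl; simp at h)) h.le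
    simpa [max_eq_right h.le] using hlim 0 (tendsto_Phi_div_sqrt_add_mul_sqrt_of_neg hL)
  · have hSK : S = K := by
      rcases hα with rfl | rfl <;> linarith
    have hL : L = 0 := by simp [L, hSK, div_self hK.ne']
    simpa [h] using hlim (Phi 0) (hL ▸ tendsto_Phi_zero_div_sqrt_add_mul_sqrt)
  · have hL := pos_of_mul_pos_left (hsign (by rintro rfl; simp at h)) h.le
    simpa [max_eq_left h.le] using hlim 1 (tendsto_Phi_div_sqrt_add_mul_sqrt_of_pos hL)

end BlackScholes

lemma fXVA_of_nonneg {lB lC RB RC v : ℝ} (hv : 0 ≤ v) :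
    fXVA lB lC RB RC v = (lB * (1 - RB) + lC * (1 - RC)) * v := by
  rw [fXVA, min_eq_right hv, max_eq_left hv]
  ring

theorem basket_lower_boundary_solution_general
    (σ₂ K r rR₂ T α lB lC RB RC : ℝ)
    (hσ₂ : 0 < σ₂) (hK : 0 < K) (hα : α = 1 ∨ α = -1)
    (W : ℝ → ℝ → ℝ)
    (hW : ∀ t S₂, W t S₂ = 1 / 2 * BS σ₂ (2 * K) r rR₂ α t S₂
      * Real.exp (-(lB * (1 - RB) + lC * (1 - RC)) * t)) :
    (∀ t ∈ Set.Ioo 0 T, ∀ S₂ ∈ Set.Ioi (0 : ℝ),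
      deriv (fun τ => W τ S₂) t
        - σ₂ ^ 2 * S₂ ^ 2 / 2 * deriv (deriv (fun s => W t s)) S₂
        - rR₂ * S₂ * deriv (fun s => W t s) S₂
        + r * W t S₂ + fXVA lB lC RB RC (W t S₂) = 0) ∧
    (∀ S₂ > (0 : ℝ),
      Filter.Tendsto (fun t => W t S₂) (nhdsWithin 0 (Set.Ioi 0))
        (nhds (max (α * (S₂ / 2 - K)) 0))) := by
  set c := lB * (1 - RB) + lC * (1 - RC)
  have h2K : 0 < 2 * K := by positivity
  have hWτ (S₂ : ℝ) :
      (fun τ => W τ S₂) = fun τ => 1 / 2 * BS σ₂ (2 * K) r rR₂ α τ S₂ * exp (-c * τ) :=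
    funext fun τ => hW τ S₂
  refine ⟨fun t ht S₂ hS₂ => ?_, fun S₂ hS₂ => ?_⟩
  · have hBS := (hasDerivAt_BS_time (r := r) (rR := rR₂) hα hσ₂ h2K ht.1 hS₂).differentiableAt
      |>.hasDerivAt
    have hWt := (hBS.const_mul (1 / 2)).fun_mul ((hasDerivAt_id' t).const_mul (-c)).exp
    have hWs : (fun s => W t s) = fun s => exp (-c * t) / 2 * BS σ₂ (2 * K) r rR₂ α t s := by
      funext s; rw [hW]; ring
    have hW₀ : 0 ≤ W t S₂ := by
      rw [hW]; have := BS_nonneg (r := r) (rR := rR₂) hα hσ₂ h2K ht.1 hS₂; positivity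
    rw [hWτ, hWt.deriv, fXVA_of_nonneg hW₀, hWs, deriv_const_mul_field', deriv_const_mul_field',
      hW]
    linear_combination exp (-c * t) / 2 * BS_pde (r := r) (rR := rR₂) hα hσ₂ h2K ht.1 hS₂
  · have h := ((tendsto_BS_payoff (r := r) (rR := rR₂) hα hσ₂ h2K hS₂).const_mul (1 / 2)).mul
      (tendsto_exp_mul_nhdsGT_zero (-c))
    rw [hWτ]
    convert h using 2
    rw [mul_one, mul_max_of_nonneg _ _ (by norm_num : (0 : ℝ) ≤ 1 / 2), mul_zero]
    ring_nf

/-- The lower-boundary (`S₁ = 0`) problem of the two-dimensional risky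
Black–Scholes arithmetic-average basket option is solved by
`W(t,S₂) = (1/2) 𝓑𝓢_{2K}(t,S₂) e^{−(λ_B(1−R_B)+λ_C(1−R_C))t}`, where `𝓑𝓢_{2K}`
is the Black–Scholes formula with strike `2K`, volatility `σ₂` and repo rate
`r_{R₂}`; moreover `W(t,S₂) → max{α(S₂/2 − K), 0}` as `t → 0⁺`. -/
theorem basket_lower_boundary_solution
    (σ₂ K r rR₂ T α lB lC RB RC : ℝ)
    (hσ₂ : 0 < σ₂) (hK : 0 < K) (hT : 0 < T) (hα : α = 1 ∨ α = -1)
    (hlB : 0 ≤ lB) (hlC : 0 ≤ lC)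
    (hRB : RB ∈ Set.Icc (0 : ℝ) 1) (hRC : RC ∈ Set.Icc (0 : ℝ) 1)
    (W : ℝ → ℝ → ℝ)
    (hW : ∀ t S₂, W t S₂ = 1 / 2 * BS σ₂ (2 * K) r rR₂ α t S₂
      * Real.exp (-(lB * (1 - RB) + lC * (1 - RC)) * t)) :
    (∀ t ∈ Set.Ioo 0 T, ∀ S₂ ∈ Set.Ioi (0 : ℝ),
      deriv (fun τ => W τ S₂) t
        - σ₂ ^ 2 * S₂ ^ 2 / 2 * deriv (deriv (fun s => W t s)) S₂
        - rR₂ * S₂ * deriv (fun s => W t s) S₂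
        + r * W t S₂ + fXVA lB lC RB RC (W t S₂) = 0) ∧
    (∀ S₂ > (0 : ℝ),
      Filter.Tendsto (fun t => W t S₂) (nhdsWithin 0 (Set.Ioi 0))
        (nhds (max (α * (S₂ / 2 - K)) 0))) :=
  basket_lower_boundary_solution_general σ₂ K r rR₂ T α lB lC RB RC hσ₂ hK hα W hW
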